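/- arXiv:2507.14772 — 2 statements merged into one kernel-verified Lean document; each statement's English description precedes it below -/
import Mathlib

section
/- Let λ = −1/2 and κ ≤ 1/2, and let (u,b) be a smooth solution of the generalized system on [0,1]×[0,T) satisfying Dirichlet boundary conditions. Set E₀ := ∫₀¹(u₀'(x))² dx + ∫₀¹(b₀'(x))² dx. Then for all t ∈ [0,T) and all x ∈ [0,1]: |u(x,t)| ≤ (∫₀¹(∂ₓu(y,t))² dy)^{1/2} ≤ √E₀ and |b(x,t)| ≤ (∫₀¹(∂ₓb(y,t))² dy)^{1/2} ≤ √E₀. -/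
open Real Set Filter Topology MeasureTheory intervalIntegral

noncomputable section

/-- Spatial derivative `∂ₓ f (x,t)`. -/
def pdx (f : ℝ → ℝ → ℝ) (x t : ℝ) : ℝ := deriv (fun y => f y t) x

/-- Second spatial derivative `∂ₓ² f (x,t)`. -/
def pdxx (f : ℝ → ℝ → ℝ) (x t : ℝ) : ℝ := iteratedDeriv 2 (fun y => f y t) x

/-- Time derivative `∂ₜ f (x,t)`. -/
def pdt (f : ℝ → ℝ → ℝ) (x t : ℝ) : ℝ := deriv (fun s => f x s) t

/-- Mixed derivative `∂ₜ∂ₓ f (x,t)`. -/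
def pdtx (f : ℝ → ℝ → ℝ) (x t : ℝ) : ℝ := deriv (fun s => pdx f x s) t

/-- The nonlocal term `I(t)`. -/
def Iterm (lam kappa : ℝ) (u b : ℝ → ℝ → ℝ) (t : ℝ) : ℝ :=
  (lam + kappa) * (∫ y in (0:ℝ)..1, (pdx b y t) ^ 2)
    - (lam + 1) * (∫ y in (0:ℝ)..1, (pdx u y t) ^ 2)

/-- `(u,b)` is a smooth solution of the generalized system on `[0,1] × [0,T)`
(the time `T` is an extended real, allowing `T = ∞`). -/
def GSys (lam kappa : ℝ) (T : EReal) (u b : ℝ → ℝ → ℝ) : Prop :=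
  ContDiff ℝ (⊤ : ℕ∞) (fun p : ℝ × ℝ => u p.1 p.2) ∧
  ContDiff ℝ (⊤ : ℕ∞) (fun p : ℝ × ℝ => b p.1 p.2) ∧
  ∀ x ∈ Icc (0:ℝ) 1, ∀ t : ℝ, 0 ≤ t → (t : EReal) < T →
    (pdtx u x t + u x t * pdxx u x t
      = lam * (pdx u x t) ^ 2 - lam * (pdx b x t) ^ 2 + kappa * b x t * pdxx b x t
        + Iterm lam kappa u b t) ∧
    (pdt b x t + u x t * pdx b x t = kappa * b x t * pdx u x t)

/-- Dirichlet boundary conditions on `[0,T)`. -/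
def DirichletBC (T : EReal) (u b : ℝ → ℝ → ℝ) : Prop :=
  ∀ t : ℝ, 0 ≤ t → (t : EReal) < T →
    u 0 t = 0 ∧ u 1 t = 0 ∧ b 0 t = 0 ∧ b 1 t = 0

/-- Periodic boundary conditions on `[0,T)`. -/
def PeriodicBC (T : EReal) (u b : ℝ → ℝ → ℝ) : Prop :=
  ∀ t : ℝ, 0 ≤ t → (t : EReal) < T →
    u 0 t = u 1 t ∧ pdx u 0 t = pdx u 1 t ∧ b 0 t = b 1 t ∧ pdx b 0 t = pdx b 1 t

/-- `γ` is a Lagrangian trajectory for `u` starting at `α₀`, on the time interval `[0,T)`. -/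
def Traj (T : EReal) (u : ℝ → ℝ → ℝ) (α₀ : ℝ) (γ : ℝ → ℝ) : Prop :=
  γ 0 = α₀ ∧ ∀ t : ℝ, 0 ≤ t → (t : EReal) < T →
    γ t ∈ Icc (0:ℝ) 1 ∧ HasDerivAt γ (u (γ t) t) t

/-- The Jacobian `γ_α(α₀,t) = exp (∫₀ᵗ ∂ₓu(γ(α₀,s),s) ds)` along a trajectory `γ`. -/
def Jac (u : ℝ → ℝ → ℝ) (γ : ℝ → ℝ) (t : ℝ) : ℝ :=
  Real.exp (∫ s in (0:ℝ)..t, pdx u (γ s) s)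

/-- `f` has a zero of order `m` at `x₀`. -/
def ZeroOfOrder (f : ℝ → ℝ) (m : ℕ) (x₀ : ℝ) : Prop :=
  (∀ n < m, iteratedDeriv n f x₀ = 0) ∧ iteratedDeriv m f x₀ ≠ 0


def D1 (F : ℝ × ℝ → ℝ) (p : ℝ × ℝ) : ℝ := fderiv ℝ F p (1, 0)
def D2 (F : ℝ × ℝ → ℝ) (p : ℝ × ℝ) : ℝ := fderiv ℝ F p (0, 1)

lemma contDiff_D1 {F : ℝ × ℝ → ℝ} (hF : ContDiff ℝ (⊤ : ℕ∞) F) : ContDiff ℝ (⊤ : ℕ∞) (D1 F) :=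
  (ContinuousLinearMap.apply ℝ ℝ ((1:ℝ), (0:ℝ))).contDiff.comp (hF.fderiv_right (by simp))

lemma contDiff_D2 {F : ℝ × ℝ → ℝ} (hF : ContDiff ℝ (⊤ : ℕ∞) F) : ContDiff ℝ (⊤ : ℕ∞) (D2 F) :=
  (ContinuousLinearMap.apply ℝ ℝ ((0:ℝ), (1:ℝ))).contDiff.comp (hF.fderiv_right (by simp))

lemma hasDerivAt_slice1 {F : ℝ × ℝ → ℝ} (hF : ContDiff ℝ (⊤ : ℕ∞) F) (x t : ℝ) :
    HasDerivAt (fun y => F (y, t)) (D1 F (x, t)) x := by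
  have h1 : HasDerivAt (fun y : ℝ => (y, t)) ((1:ℝ), (0:ℝ)) x := by
    simpa using (hasDerivAt_id x).prodMk (hasDerivAt_const x t)
  exact (hF.differentiable (by simp) (x, t)).hasFDerivAt.comp_hasDerivAt x h1

lemma hasDerivAt_slice2 {F : ℝ × ℝ → ℝ} (hF : ContDiff ℝ (⊤ : ℕ∞) F) (x t : ℝ) :
    HasDerivAt (fun s => F (x, s)) (D2 F (x, t)) t := by
  have h1 : HasDerivAt (fun s : ℝ => (x, s)) ((0:ℝ), (1:ℝ)) t := by
    simpa using (hasDerivAt_const t x).prodMk (hasDerivAt_id t)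
  exact (hF.differentiable (by simp) (x, t)).hasFDerivAt.comp_hasDerivAt t h1

lemma deriv_slice1 {F : ℝ × ℝ → ℝ} (hF : ContDiff ℝ (⊤ : ℕ∞) F) (x t : ℝ) :
    deriv (fun y => F (y, t)) x = D1 F (x, t) := (hasDerivAt_slice1 hF x t).deriv

lemma deriv_slice2 {F : ℝ × ℝ → ℝ} (hF : ContDiff ℝ (⊤ : ℕ∞) F) (x t : ℝ) :
    deriv (fun s => F (x, s)) t = D2 F (x, t) := (hasDerivAt_slice2 hF x t).deriv

/-- Clairaut. -/
lemma D2_D1 {F : ℝ × ℝ → ℝ} (hF : ContDiff ℝ (⊤ : ℕ∞) F) (p : ℝ × ℝ) :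
    D2 (D1 F) p = D1 (D2 F) p := by
  have hd : ∀ y, HasFDerivAt F (fderiv ℝ F y) y :=
    fun y => (hF.differentiable (by simp) y).hasFDerivAt
  have hd2 : HasFDerivAt (fderiv ℝ F) (fderiv ℝ (fderiv ℝ F) p) p :=
    (((hF.fderiv_right (m := (⊤ : ℕ∞)) (by simp)).differentiable (by simp)) p).hasFDerivAt
  have hsymm := second_derivative_symmetric hd hd2 ((1:ℝ), (0:ℝ)) ((0:ℝ), (1:ℝ))
  have e1 : D2 (D1 F) p = fderiv ℝ (fderiv ℝ F) p (0, 1) (1, 0) := by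
    have : HasFDerivAt (D1 F)
        (((ContinuousLinearMap.apply ℝ ℝ ((1:ℝ), (0:ℝ)))).comp
          (fderiv ℝ (fderiv ℝ F) p)) p :=
      ((ContinuousLinearMap.apply ℝ ℝ ((1:ℝ), (0:ℝ))).hasFDerivAt).comp p hd2
    simp [D2, this.fderiv]
  have e2 : D1 (D2 F) p = fderiv ℝ (fderiv ℝ F) p (1, 0) (0, 1) := by
    have : HasFDerivAt (D2 F)
        (((ContinuousLinearMap.apply ℝ ℝ ((0:ℝ), (1:ℝ)))).comp
          (fderiv ℝ (fderiv ℝ F) p)) p :=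
      ((ContinuousLinearMap.apply ℝ ℝ ((0:ℝ), (1:ℝ))).hasFDerivAt).comp p hd2
    simp [D1, this.fderiv]
  rw [e1, e2, hsymm]

-- link pdx-style derivatives (stated with explicit curried f and F := uncurry)
lemma pdx_eq_D1 {f : ℝ → ℝ → ℝ} (hf : ContDiff ℝ (⊤ : ℕ∞) (fun p : ℝ × ℝ => f p.1 p.2)) (x t : ℝ) : pdx f x t = D1 (fun p : ℝ × ℝ => f p.1 p.2) (x, t) :=
  deriv_slice1 hf x t

lemma pdxx_eq {f : ℝ → ℝ → ℝ} (hf : ContDiff ℝ (⊤ : ℕ∞) (fun p : ℝ × ℝ => f p.1 p.2)) (x t : ℝ) :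
    iteratedDeriv 2 (fun y => f y t) x = D1 (D1 (fun p : ℝ × ℝ => f p.1 p.2)) (x, t) := by
  rw [iteratedDeriv_succ, iteratedDeriv_one]
  have : deriv (fun y => f y t) = fun y => D1 (fun p : ℝ × ℝ => f p.1 p.2) (y, t) :=
    funext fun y => deriv_slice1 hf y t
  rw [this]
  exact deriv_slice1 (contDiff_D1 hf) x t

lemma pdt_eq {f : ℝ → ℝ → ℝ} (hf : ContDiff ℝ (⊤ : ℕ∞) (fun p : ℝ × ℝ => f p.1 p.2)) (x t : ℝ) :
    deriv (fun s => f x s) t = D2 (fun p : ℝ × ℝ => f p.1 p.2) (x, t) :=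
  deriv_slice2 hf x t

lemma pdtx_eq {f : ℝ → ℝ → ℝ} (hf : ContDiff ℝ (⊤ : ℕ∞) (fun p : ℝ × ℝ => f p.1 p.2)) (x t : ℝ) :
    deriv (fun s => pdx f x s) t = D2 (D1 (fun p : ℝ × ℝ => f p.1 p.2)) (x, t) := by
  have : (fun s => pdx f x s) = fun s => D1 (fun p : ℝ × ℝ => f p.1 p.2) (x, s) :=
    funext fun s => deriv_slice1 hf x s
  rw [this]
  exact deriv_slice2 (contDiff_D1 hf) x t


/-- differentiation under the interval integral for smooth integrands -/
lemma hasDerivAt_intF {H : ℝ × ℝ → ℝ} (hH : ContDiff ℝ (⊤ : ℕ∞) H) (t₀ : ℝ) :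
    HasDerivAt (fun t => ∫ y in (0:ℝ)..1, H (y, t))
      (∫ y in (0:ℝ)..1, D2 H (y, t₀)) t₀ := by
  obtain ⟨C, hC⟩ := (isCompact_Icc.prod isCompact_Icc :
      IsCompact (Icc (0:ℝ) 1 ×ˢ Icc (t₀ - 1) (t₀ + 1))).exists_bound_of_continuousOn
    ((contDiff_D2 hH).continuous.continuousOn)
  have key := intervalIntegral.hasDerivAt_integral_of_dominated_loc_of_deriv_le
    (𝕜 := ℝ) (μ := volume) (a := 0) (b := 1) (s := Metric.ball t₀ 1) (bound := fun _ => C)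
    (F := fun t y => H (y, t)) (F' := fun t y => D2 H (y, t)) (x₀ := t₀)
    (Metric.ball_mem_nhds t₀ one_pos)
    (Eventually.of_forall fun t =>
      ((hH.continuous.comp (continuous_id.prodMk continuous_const)).aestronglyMeasurable))
    ((hH.continuous.comp (continuous_id.prodMk continuous_const)).intervalIntegrable 0 1)
    (((contDiff_D2 hH).continuous.comp (continuous_id.prodMk continuous_const)).aestronglyMeasurable)
    ?_ (intervalIntegrable_const) ?_
  · exact key.2
  · refine Eventually.of_forall fun y hy t ht => ?_
    refine hC (y, t) ⟨?_, ?_⟩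
    · rw [uIoc_of_le (by norm_num : (0:ℝ) ≤ 1)] at hy
      exact ⟨le_of_lt hy.1, hy.2⟩
    · have := Metric.mem_ball.mp ht
      rw [Real.dist_eq] at this
      constructor <;> [linarith [abs_le.mp (le_of_lt this)]; linarith [(abs_le.mp (le_of_lt this)).2]]
  · exact Eventually.of_forall fun y _ t _ => hasDerivAt_slice2 hH y t

lemma sq_integral_le {g : ℝ → ℝ} (hg : Continuous g) {x : ℝ} (hx0 : 0 ≤ x) (hx1 : x ≤ 1) :
    (∫ y in (0:ℝ)..x, g y) ^ 2 ≤ ∫ y in (0:ℝ)..1, (g y) ^ 2 := by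
  have hQnn : 0 ≤ ∫ y in (0:ℝ)..x, (g y)^2 :=
    intervalIntegral.integral_nonneg hx0 (fun y _ => sq_nonneg _)
  have hle : (∫ y in (0:ℝ)..x, (g y)^2) ≤ ∫ y in (0:ℝ)..1, (g y)^2 :=
    intervalIntegral.integral_mono_interval le_rfl hx0 hx1
      (Eventually.of_forall fun y => sq_nonneg _) ((hg.pow 2).intervalIntegrable 0 1)
  rcases eq_or_lt_of_le hx0 with h|h
  · simp [← h]
    exact le_trans (le_of_eq (by simp [← h])) (le_trans hQnn hle)
  · set c : ℝ := (∫ y in (0:ℝ)..x, g y) / x with hc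
    have hcx : c * x = ∫ y in (0:ℝ)..x, g y := div_mul_cancel₀ _ (ne_of_gt h)
    have hnn : 0 ≤ ∫ y in (0:ℝ)..x, (g y - c)^2 :=
      intervalIntegral.integral_nonneg hx0 (fun y _ => sq_nonneg _)
    have hexp : (∫ y in (0:ℝ)..x, (g y - c)^2)
        = (∫ y in (0:ℝ)..x, (g y)^2) - 2*c*(∫ y in (0:ℝ)..x, g y) + c^2 * x := by
      have he : ∀ y : ℝ, (g y - c)^2 = (g y)^2 - (2*c) * g y + c^2 := fun y => by ring
      simp_rw [he]
      rw [intervalIntegral.integral_add (f := fun y => g y ^ 2 - 2 * c * g y) (g := fun _ => c ^ 2)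
          (((hg.pow 2).sub (continuous_const.mul hg)).intervalIntegrable 0 x)
          (intervalIntegrable_const),
        intervalIntegral.integral_sub (f := fun y => g y ^ 2) (g := fun y => 2 * c * g y) ((hg.pow 2).intervalIntegrable 0 x)
          ((continuous_const.mul hg).intervalIntegrable 0 x),
        intervalIntegral.integral_const_mul, intervalIntegral.integral_const, smul_eq_mul]
      ring
    have key : (∫ y in (0:ℝ)..x, g y)^2 ≤ x * (∫ y in (0:ℝ)..x, (g y)^2) := by
      nlinarith [mul_le_mul_of_nonneg_left hnn (le_of_lt h), hexp, hcx, sq_nonneg c]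
    nlinarith [key, hQnn, hle, h, hx1, mul_le_mul_of_nonneg_right hx1 hQnn]

-- wrappers stated with pdx etc.
lemma pdxx_eq' {f : ℝ → ℝ → ℝ} (hf : ContDiff ℝ (⊤ : ℕ∞) (fun p : ℝ × ℝ => f p.1 p.2)) (x t : ℝ) :
    pdxx f x t = D1 (D1 (fun p : ℝ × ℝ => f p.1 p.2)) (x, t) := pdxx_eq hf x t

lemma pdt_eq' {f : ℝ → ℝ → ℝ} (hf : ContDiff ℝ (⊤ : ℕ∞) (fun p : ℝ × ℝ => f p.1 p.2)) (x t : ℝ) :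
    pdt f x t = D2 (fun p : ℝ × ℝ => f p.1 p.2) (x, t) := pdt_eq hf x t

lemma pdtx_eq' {f : ℝ → ℝ → ℝ} (hf : ContDiff ℝ (⊤ : ℕ∞) (fun p : ℝ × ℝ => f p.1 p.2)) (x t : ℝ) :
    pdtx f x t = D2 (D1 (fun p : ℝ × ℝ => f p.1 p.2)) (x, t) := pdtx_eq hf x t

lemma D2_sq {φ : ℝ × ℝ → ℝ} (hφ : ContDiff ℝ (⊤ : ℕ∞) φ) (x t : ℝ) :
    D2 (fun p => (φ p) ^ 2) (x, t) = 2 * φ (x, t) * D2 φ (x, t) := by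
  have h : HasDerivAt (fun s => φ (x, s) ^ 2) _ t := (hasDerivAt_slice2 hφ x t).pow 2
  rw [← deriv_slice2 (hφ.pow 2) x t]
  simpa [mul_comm, mul_assoc, mul_left_comm] using h.deriv

lemma energy_conserved (kappa : ℝ) (T : EReal) (u b : ℝ → ℝ → ℝ)
    (hsys : GSys (-(1/2)) kappa T u b) (hbc : DirichletBC T u b) :
    ∀ t : ℝ, 0 ≤ t → (t : EReal) < T →
      (∫ y in (0:ℝ)..1, (pdx u y t) ^ 2) + (∫ y in (0:ℝ)..1, (pdx b y t) ^ 2)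
        = (∫ y in (0:ℝ)..1, (pdx u y 0) ^ 2) + (∫ y in (0:ℝ)..1, (pdx b y 0) ^ 2) := by
  obtain ⟨hF, hG, heq⟩ := hsys
  set Fu : ℝ × ℝ → ℝ := fun p => u p.1 p.2 with hFu
  set Fb : ℝ × ℝ → ℝ := fun p => b p.1 p.2 with hFb
  have hP : ContDiff ℝ (⊤ : ℕ∞) (D1 Fu) := contDiff_D1 hF
  have hQ : ContDiff ℝ (⊤ : ℕ∞) (D1 Fb) := contDiff_D1 hG
  -- the energy, in D1 form
  set E : ℝ → ℝ := fun s =>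
    (∫ y in (0:ℝ)..1, (D1 Fu (y, s)) ^ 2) + (∫ y in (0:ℝ)..1, (D1 Fb (y, s)) ^ 2) with hE
  have hpdx_u : ∀ y s : ℝ, pdx u y s = D1 Fu (y, s) := fun y s => pdx_eq_D1 hF y s
  have hpdx_b : ∀ y s : ℝ, pdx b y s = D1 Fb (y, s) := fun y s => pdx_eq_D1 hG y s
  have hEeq : ∀ s : ℝ,
      (∫ y in (0:ℝ)..1, (pdx u y s) ^ 2) + (∫ y in (0:ℝ)..1, (pdx b y s) ^ 2) = E s := by
    intro s
    simp only [hE]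
    congr 1
    · exact intervalIntegral.integral_congr fun y _ => by rw [hpdx_u]
    · exact intervalIntegral.integral_congr fun y _ => by rw [hpdx_b]
  -- derivative of E
  have hEderiv : ∀ s : ℝ, HasDerivAt E
      (∫ y in (0:ℝ)..1,
        (2 * D1 Fu (y, s) * D2 (D1 Fu) (y, s) + 2 * D1 Fb (y, s) * D2 (D1 Fb) (y, s))) s := by
    intro s
    have h1 := hasDerivAt_intF (hP.pow 2) s
    have h2 := hasDerivAt_intF (hQ.pow 2) s
    have h1' : HasDerivAt (fun t => ∫ y in (0:ℝ)..1, (D1 Fu (y, t)) ^ 2)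
        (∫ y in (0:ℝ)..1, 2 * D1 Fu (y, s) * D2 (D1 Fu) (y, s)) s := by
      have hcg : (∫ y in (0:ℝ)..1, D2 (fun p => D1 Fu p ^ 2) (y, s))
          = ∫ y in (0:ℝ)..1, 2 * D1 Fu (y, s) * D2 (D1 Fu) (y, s) :=
        intervalIntegral.integral_congr (μ := volume) fun y _ => D2_sq hP y s
      rw [hcg] at h1
      exact h1
    have h2' : HasDerivAt (fun t => ∫ y in (0:ℝ)..1, (D1 Fb (y, t)) ^ 2)
        (∫ y in (0:ℝ)..1, 2 * D1 Fb (y, s) * D2 (D1 Fb) (y, s)) s := by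
      have hcg : (∫ y in (0:ℝ)..1, D2 (fun p => D1 Fb p ^ 2) (y, s))
          = ∫ y in (0:ℝ)..1, 2 * D1 Fb (y, s) * D2 (D1 Fb) (y, s) :=
        intervalIntegral.integral_congr (μ := volume) fun y _ => D2_sq hQ y s
      rw [hcg] at h2
      exact h2
    have hc1 : Continuous fun y => 2 * D1 Fu (y, s) * D2 (D1 Fu) (y, s) := by
      have := ((contDiff_D1 hF).continuous.comp (continuous_id.prodMk continuous_const)
        : Continuous fun y : ℝ => D1 Fu (y, s))
      have h2c := ((contDiff_D2 hP).continuous.comp (continuous_id.prodMk continuous_const)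
        : Continuous fun y : ℝ => D2 (D1 Fu) (y, s))
      exact (continuous_const.mul this).mul h2c
    have hc2 : Continuous fun y => 2 * D1 Fb (y, s) * D2 (D1 Fb) (y, s) := by
      have := ((contDiff_D1 hG).continuous.comp (continuous_id.prodMk continuous_const)
        : Continuous fun y : ℝ => D1 Fb (y, s))
      have h2c := ((contDiff_D2 hQ).continuous.comp (continuous_id.prodMk continuous_const)
        : Continuous fun y : ℝ => D2 (D1 Fb) (y, s))
      exact (continuous_const.mul this).mul h2c
    have := h1'.add h2'
    rwa [← intervalIntegral.integral_add (hc1.intervalIntegrable 0 1)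
      (hc2.intervalIntegrable 0 1)] at this
  -- the derivative vanishes on [0, T)
  have hzero : ∀ s : ℝ, 0 ≤ s → (s : EReal) < T →
      (∫ y in (0:ℝ)..1,
        (2 * D1 Fu (y, s) * D2 (D1 Fu) (y, s) + 2 * D1 Fb (y, s) * D2 (D1 Fb) (y, s))) = 0 := by
    intro s hs0 hsT
    set I : ℝ := Iterm (-(1/2)) kappa u b s with hI
    set Φ : ℝ → ℝ := fun y =>
      -(Fu (y, s) * (D1 Fu (y, s)) ^ 2) - Fu (y, s) * (D1 Fb (y, s)) ^ 2
        + 2 * kappa * (D1 Fu (y, s) * Fb (y, s) * D1 Fb (y, s)) + 2 * I * Fu (y, s) with hΦ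
    set ψ : ℝ → ℝ := fun y =>
      -(D1 Fu (y, s) * (D1 Fu (y, s)) ^ 2
          + Fu (y, s) * (2 * D1 Fu (y, s) * D1 (D1 Fu) (y, s)))
        - (D1 Fu (y, s) * (D1 Fb (y, s)) ^ 2
          + Fu (y, s) * (2 * D1 Fb (y, s) * D1 (D1 Fb) (y, s)))
        + 2 * kappa * (D1 (D1 Fu) (y, s) * Fb (y, s) * D1 Fb (y, s)
          + D1 Fu (y, s) * D1 Fb (y, s) * D1 Fb (y, s)
          + D1 Fu (y, s) * Fb (y, s) * D1 (D1 Fb) (y, s))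
        + 2 * I * D1 Fu (y, s) with hψ
    have hΦderiv : ∀ y : ℝ, HasDerivAt Φ (ψ y) y := by
      intro y
      have dU := hasDerivAt_slice1 hF y s
      have dP := hasDerivAt_slice1 hP y s
      have dB := hasDerivAt_slice1 hG y s
      have dQ := hasDerivAt_slice1 hQ y s
      have h : HasDerivAt Φ _ y := (((dU.mul (dP.pow 2)).neg.sub (dU.mul (dQ.pow 2))).add
          (((dP.mul dB).mul dQ).const_mul (2 * kappa))).add (dU.const_mul (2 * I))
      convert h using 1
      simp only [hψ, Pi.pow_apply, Pi.mul_apply]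
      ring
    have hcU : Continuous fun y : ℝ => Fu (y, s) :=
      hF.continuous.comp (continuous_id.prodMk continuous_const)
    have hcB : Continuous fun y : ℝ => Fb (y, s) :=
      hG.continuous.comp (continuous_id.prodMk continuous_const)
    have hcP : Continuous fun y : ℝ => D1 Fu (y, s) :=
      hP.continuous.comp (continuous_id.prodMk continuous_const)
    have hcQ : Continuous fun y : ℝ => D1 Fb (y, s) :=
      hQ.continuous.comp (continuous_id.prodMk continuous_const)
    have hcP2 : Continuous fun y : ℝ => D1 (D1 Fu) (y, s) :=
      (contDiff_D1 hP).continuous.comp (continuous_id.prodMk continuous_const)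
    have hcQ2 : Continuous fun y : ℝ => D1 (D1 Fb) (y, s) :=
      (contDiff_D1 hQ).continuous.comp (continuous_id.prodMk continuous_const)
    have hcψ : Continuous ψ := by
      simp only [hψ]
      exact (((((hcP.mul (hcP.pow 2)).add
          (hcU.mul ((continuous_const.mul hcP).mul hcP2))).neg.sub
          ((hcP.mul (hcQ.pow 2)).add
            (hcU.mul ((continuous_const.mul hcQ).mul hcQ2)))).add
          (continuous_const.mul ((((hcP2.mul hcB).mul hcQ).add
            ((hcP.mul hcQ).mul hcQ)).add ((hcP.mul hcB).mul hcQ2)))).add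
          (continuous_const.mul hcP))
    have hFTC : (∫ y in (0:ℝ)..1, ψ y) = Φ 1 - Φ 0 :=
      intervalIntegral.integral_eq_sub_of_hasDerivAt (fun y _ => hΦderiv y)
        (hcψ.intervalIntegrable 0 1)
    obtain ⟨hu0, hu1, hb0, hb1⟩ := hbc s hs0 hsT
    have hΦ0 : Φ 0 = 0 := by simp only [hΦ]; simp [hFu, hFb] at hu0 hb0 ⊢; simp [hu0, hb0]
    have hΦ1 : Φ 1 = 0 := by simp only [hΦ]; simp [hFu, hFb] at hu1 hb1 ⊢; simp [hu1, hb1]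
    -- the integrand equals ψ a.e.
    have hcong : (∫ y in (0:ℝ)..1,
        (2 * D1 Fu (y, s) * D2 (D1 Fu) (y, s) + 2 * D1 Fb (y, s) * D2 (D1 Fb) (y, s)))
        = ∫ y in (0:ℝ)..1, ψ y := by
      apply intervalIntegral.integral_congr_ae
      have h1 : ∀ᵐ y : ℝ ∂volume, y ≠ 1 := by
        rw [ae_iff]
        have : {a : ℝ | ¬ a ≠ 1} = {1} := by ext a; simp
        rw [this]
        exact measure_singleton 1
      filter_upwards [h1] with y hy1 hy
      rw [uIoc_of_le (by norm_num : (0:ℝ) ≤ 1)] at hy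
      have hyo : y ∈ Ioo (0:ℝ) 1 := ⟨hy.1, lt_of_le_of_ne hy.2 hy1⟩
      -- equation (i)
      have hi := (heq y ⟨le_of_lt hyo.1, le_of_lt hyo.2⟩ s hs0 hsT).1
      rw [pdtx_eq' hF, pdxx_eq' hF, pdxx_eq' hG] at hi
      simp only [hpdx_u, hpdx_b] at hi
      have hi' : D2 (D1 Fu) (y, s) + Fu (y, s) * D1 (D1 Fu) (y, s)
          = -(1/2) * (D1 Fu (y, s)) ^ 2 - -(1/2) * (D1 Fb (y, s)) ^ 2
            + kappa * Fb (y, s) * D1 (D1 Fb) (y, s) + I := hi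
      -- equation (ii), differentiated in x via Clairaut
      have hii : D2 (D1 Fb) (y, s)
          = kappa * D1 Fb (y, s) * D1 Fu (y, s) + kappa * Fb (y, s) * D1 (D1 Fu) (y, s)
            - (D1 Fu (y, s) * D1 Fb (y, s) + Fu (y, s) * D1 (D1 Fb) (y, s)) := by
        rw [D2_D1 hG]
        rw [← deriv_slice1 (contDiff_D2 hG) y s]
        have hev : (fun x => D2 Fb (x, s))
            =ᶠ[nhds y] fun x => kappa * Fb (x, s) * D1 Fu (x, s) - Fu (x, s) * D1 Fb (x, s) := by
          filter_upwards [Icc_mem_nhds hyo.1 hyo.2] with x hx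
          have h2 := (heq x hx s hs0 hsT).2
          rw [pdt_eq' hG] at h2
          simp only [hpdx_u, hpdx_b] at h2
          have : D2 Fb (x, s) + Fu (x, s) * D1 Fb (x, s)
              = kappa * Fb (x, s) * D1 Fu (x, s) := h2
          linarith
        rw [hev.deriv_eq]
        have dB := hasDerivAt_slice1 hG y s
        have dP := hasDerivAt_slice1 hP y s
        have dU := hasDerivAt_slice1 hF y s
        have dQ := hasDerivAt_slice1 hQ y s
        have h : HasDerivAt (fun x => kappa * Fb (x, s) * D1 Fu (x, s) - Fu (x, s) * D1 Fb (x, s)) _ y :=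
          ((dB.const_mul kappa).mul dP).sub (dU.mul dQ)
        rw [h.deriv]
      simp only [hψ]
      linear_combination (2 * D1 Fu (y, s)) * hi' + (2 * D1 Fb (y, s)) * hii
    rw [hcong, hFTC, hΦ0, hΦ1, sub_zero]
  -- E is constant on [0, t]
  intro t ht0 htT
  rw [hEeq t, hEeq 0]
  have hcontE : ContinuousOn E (Icc 0 t) :=
    (fun s _ => ((hEderiv s).differentiableAt.continuousAt).continuousWithinAt)
  have hder : ∀ s ∈ Ico (0:ℝ) t, HasDerivWithinAt E 0 (Ici s) s := by
    intro s hs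
    have hsT : (s : EReal) < T := lt_trans (by exact_mod_cast hs.2) htT
    have h0 := hzero s hs.1 hsT
    have := hEderiv s
    rw [h0] at this
    exact this.hasDerivWithinAt
  exact constant_of_has_deriv_right_zero hcontE hder t ⟨ht0, le_refl t⟩

/-- for `λ = −1/2`, `κ ≤ 1/2` with Dirichlet boundary conditions,
`|u| ≤ ‖uₓ‖₂ ≤ √E₀` and `|b| ≤ ‖bₓ‖₂ ≤ √E₀`. -/
theorem statement8 (kappa : ℝ) (hk : kappa ≤ 1/2)
    (T : EReal) (hT : 0 < T)
    (u b : ℝ → ℝ → ℝ)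
    (hsys : GSys (-(1/2)) kappa T u b)
    (hbc : DirichletBC T u b) :
    ∀ t : ℝ, 0 ≤ t → (t : EReal) < T → ∀ x ∈ Icc (0:ℝ) 1,
      |u x t| ≤ Real.sqrt (∫ y in (0:ℝ)..1, (pdx u y t) ^ 2) ∧
      Real.sqrt (∫ y in (0:ℝ)..1, (pdx u y t) ^ 2)
        ≤ Real.sqrt ((∫ y in (0:ℝ)..1, (pdx u y 0) ^ 2)
            + (∫ y in (0:ℝ)..1, (pdx b y 0) ^ 2)) ∧
      |b x t| ≤ Real.sqrt (∫ y in (0:ℝ)..1, (pdx b y t) ^ 2) ∧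
      Real.sqrt (∫ y in (0:ℝ)..1, (pdx b y t) ^ 2)
        ≤ Real.sqrt ((∫ y in (0:ℝ)..1, (pdx u y 0) ^ 2)
            + (∫ y in (0:ℝ)..1, (pdx b y 0) ^ 2)) := by
  intro t ht0 htT x hx
  obtain ⟨hF, hG, -⟩ := id hsys
  have hcons := energy_conserved kappa T u b hsys hbc t ht0 htT
  have hPc : Continuous fun y : ℝ => pdx u y t := by
    have : (fun y : ℝ => pdx u y t) = fun y => D1 (fun p : ℝ × ℝ => u p.1 p.2) (y, t) :=
      funext fun y => pdx_eq_D1 hF y t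
    rw [this]
    exact (contDiff_D1 hF).continuous.comp (continuous_id.prodMk continuous_const)
  have hQc : Continuous fun y : ℝ => pdx b y t := by
    have : (fun y : ℝ => pdx b y t) = fun y => D1 (fun p : ℝ × ℝ => b p.1 p.2) (y, t) :=
      funext fun y => pdx_eq_D1 hG y t
    rw [this]
    exact (contDiff_D1 hG).continuous.comp (continuous_id.prodMk continuous_const)
  have hAnn : 0 ≤ ∫ y in (0:ℝ)..1, (pdx u y t) ^ 2 :=
    intervalIntegral.integral_nonneg (by norm_num) (fun y _ => sq_nonneg _)
  have hBnn : 0 ≤ ∫ y in (0:ℝ)..1, (pdx b y t) ^ 2 :=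
    intervalIntegral.integral_nonneg (by norm_num) (fun y _ => sq_nonneg _)
  obtain ⟨hu0, -, hb0, -⟩ := hbc t ht0 htT
  have hval_u : (∫ y in (0:ℝ)..x, pdx u y t) = u x t := by
    have := intervalIntegral.integral_eq_sub_of_hasDerivAt
      (f := fun z => u z t) (f' := fun z => pdx u z t) (a := 0) (b := x)
      (fun z _ => by
        show HasDerivAt (fun z => u z t) (pdx u z t) z
        rw [pdx_eq_D1 hF]; exact hasDerivAt_slice1 hF z t)
      (hPc.intervalIntegrable 0 x)
    simpa [hu0] using this
  have hval_b : (∫ y in (0:ℝ)..x, pdx b y t) = b x t := by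
    have := intervalIntegral.integral_eq_sub_of_hasDerivAt
      (f := fun z => b z t) (f' := fun z => pdx b z t) (a := 0) (b := x)
      (fun z _ => by
        show HasDerivAt (fun z => b z t) (pdx b z t) z
        rw [pdx_eq_D1 hG]; exact hasDerivAt_slice1 hG z t)
      (hQc.intervalIntegrable 0 x)
    simpa [hb0] using this
  refine ⟨?_, ?_, ?_, ?_⟩
  · exact Real.abs_le_sqrt (by rw [← hval_u]; exact sq_integral_le hPc hx.1 hx.2)
  · exact Real.sqrt_le_sqrt (by linarith)
  · exact Real.abs_le_sqrt (by rw [← hval_b]; exact sq_integral_le hQc hx.1 hx.2)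
  · exact Real.sqrt_le_sqrt (by linarith)
end
end

section
/- Let λ = −1/2 and κ ≤ 1/2, and let (u,b) be a smooth solution of the generalized system on [0,1]×[0,T) satisfying periodic boundary conditions. Suppose in addition that there exists a smooth function p : [0,1]×[0,T) → ℝ with ∂ₜu + u·∂ₓu = −∂ₓp + b·∂ₓb on [0,1]×[0,T) and p(0,t) = p(1,t) for all t, and that ∫₀¹ u₀(x) dx = 0. Set E₀ := ∫₀¹(u₀'(x))² dx + ∫₀¹(b₀'(x))² dx. Then for all t ∈ [0,T): ∫₀¹ u(x,t) dx = 0, and for all x ∈ [0,1]: |u(x,t)| ≤ (∫₀¹(∂ₓu(y,t))² dy)^{1/2} ≤ √E₀. -/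
open Real Set Filter Topology MeasureTheory intervalIntegral

noncomputable section

def Sm (f : ℝ → ℝ → ℝ) : Prop := ContDiff ℝ (⊤ : ℕ∞) (fun p : ℝ × ℝ => f p.1 p.2)

namespace Sm

variable {f : ℝ → ℝ → ℝ}

lemma slice_x (hf : Sm f) (t : ℝ) : ContDiff ℝ (⊤ : ℕ∞) (fun y => f y t) :=
  hf.comp (contDiff_id.prodMk contDiff_const)

lemma slice_t (hf : Sm f) (x : ℝ) : ContDiff ℝ (⊤ : ℕ∞) (fun s => f x s) :=
  hf.comp (contDiff_const.prodMk contDiff_id)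

lemma hasDerivAt_x (hf : Sm f) (x t : ℝ) : HasDerivAt (fun y => f y t) (pdx f x t) x :=
  (((hf.slice_x t).differentiable (by simp)) x).hasDerivAt

lemma hasDerivAt_t (hf : Sm f) (x t : ℝ) : HasDerivAt (fun s => f x s) (pdt f x t) t :=
  (((hf.slice_t x).differentiable (by simp)) t).hasDerivAt

lemma pdx_eq_fderiv (hf : Sm f) (x t : ℝ) :
    pdx f x t = fderiv ℝ (fun p : ℝ × ℝ => f p.1 p.2) (x, t) ((1:ℝ), (0:ℝ)) := by
  have h1 : HasDerivAt (fun y : ℝ => ((y, t) : ℝ × ℝ)) ((1:ℝ), (0:ℝ)) x :=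
    (hasDerivAt_id x).prodMk (hasDerivAt_const x t)
  have h2 := ((hf.differentiable (by simp) (x, t)).hasFDerivAt).comp_hasDerivAt x h1
  have h3 : HasDerivAt (fun y => f y t)
      (fderiv ℝ (fun p : ℝ × ℝ => f p.1 p.2) (x, t) ((1:ℝ), (0:ℝ))) x := h2
  exact h3.deriv

lemma pdt_eq_fderiv (hf : Sm f) (x t : ℝ) :
    pdt f x t = fderiv ℝ (fun p : ℝ × ℝ => f p.1 p.2) (x, t) ((0:ℝ), (1:ℝ)) := by
  have h1 : HasDerivAt (fun s : ℝ => ((x, s) : ℝ × ℝ)) ((0:ℝ), (1:ℝ)) t :=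
    (hasDerivAt_const t x).prodMk (hasDerivAt_id t)
  have h2 := ((hf.differentiable (by simp) (x, t)).hasFDerivAt).comp_hasDerivAt t h1
  have h3 : HasDerivAt (fun s => f x s)
      (fderiv ℝ (fun p : ℝ × ℝ => f p.1 p.2) (x, t) ((0:ℝ), (1:ℝ))) t := h2
  exact h3.deriv

lemma pdx (hf : Sm f) : Sm (pdx f) := by
  have : (fun p : ℝ × ℝ => _root_.pdx f p.1 p.2)
      = fun p : ℝ × ℝ => fderiv ℝ (fun q : ℝ × ℝ => f q.1 q.2) p ((1:ℝ), (0:ℝ)) := by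
    funext p; exact hf.pdx_eq_fderiv p.1 p.2
  rw [Sm, this]
  exact (hf.fderiv_right (by simp)).clm_apply contDiff_const

lemma pdt (hf : Sm f) : Sm (pdt f) := by
  have : (fun p : ℝ × ℝ => _root_.pdt f p.1 p.2)
      = fun p : ℝ × ℝ => fderiv ℝ (fun q : ℝ × ℝ => f q.1 q.2) p ((0:ℝ), (1:ℝ)) := by
    funext p; exact hf.pdt_eq_fderiv p.1 p.2
  rw [Sm, this]
  exact (hf.fderiv_right (by simp)).clm_apply contDiff_const

lemma pdxx_eq (hf : Sm f) (x t : ℝ) : pdxx f x t = _root_.pdx (_root_.pdx f) x t := by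
  rw [pdxx, iteratedDeriv_succ, iteratedDeriv_one]
  rfl

lemma hasDerivAt_pdx_x (hf : Sm f) (x t : ℝ) :
    HasDerivAt (fun y => _root_.pdx f y t) (pdxx f x t) x := by
  rw [hf.pdxx_eq]
  exact hf.pdx.hasDerivAt_x x t

end Sm

namespace Sm
variable {f : ℝ → ℝ → ℝ}

lemma cont (hf : Sm f) : Continuous (fun p : ℝ × ℝ => f p.1 p.2) :=
  ContDiff.continuous hf

lemma fderiv_apply_comm (hf : Sm f) (q : ℝ × ℝ) (v w : ℝ × ℝ) :
    fderiv ℝ (fun p : ℝ × ℝ => fderiv ℝ (fun r : ℝ × ℝ => f r.1 r.2) p v) q w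
      = fderiv ℝ (fderiv ℝ (fun r : ℝ × ℝ => f r.1 r.2)) q w v := by
  set F := fun r : ℝ × ℝ => f r.1 r.2 with hF
  have hΦ : DifferentiableAt ℝ (fderiv ℝ F) q :=
    ((hf.fderiv_right (m := (⊤ : ℕ∞)) (by simp)).differentiable (by simp)) q
  have h2 : HasFDerivAt (fun p : ℝ × ℝ => fderiv ℝ F p v)
      ((ContinuousLinearMap.apply ℝ ℝ v).comp (fderiv ℝ (fderiv ℝ F) q)) q :=
    ((ContinuousLinearMap.apply ℝ ℝ v).hasFDerivAt).comp q hΦ.hasFDerivAt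
  rw [h2.fderiv]; rfl

lemma clairaut (hf : Sm f) (x t : ℝ) :
    pdtx f x t = _root_.pdx (_root_.pdt f) x t := by
  set F := fun r : ℝ × ℝ => f r.1 r.2 with hF
  have hg : ∀ v : ℝ × ℝ, Differentiable ℝ (fun p : ℝ × ℝ => fderiv ℝ F p v) := fun v =>
    ((hf.fderiv_right (m := (⊤ : ℕ∞)) (by simp)).clm_apply contDiff_const).differentiable (by simp)
  have h1 : HasDerivAt (fun s : ℝ => ((x, s) : ℝ × ℝ)) ((0:ℝ), (1:ℝ)) t :=
    (hasDerivAt_const t x).prodMk (hasDerivAt_id t)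
  have hL : HasDerivAt (fun s => fderiv ℝ F (x, s) ((1:ℝ),(0:ℝ)))
      (fderiv ℝ (fun p : ℝ × ℝ => fderiv ℝ F p ((1:ℝ),(0:ℝ))) (x,t) ((0:ℝ),(1:ℝ))) t :=
    ((hg _ (x,t)).hasFDerivAt).comp_hasDerivAt t h1
  have hfun : (fun s => _root_.pdx f x s) = fun s => fderiv ℝ F (x, s) ((1:ℝ),(0:ℝ)) := by
    funext s; exact hf.pdx_eq_fderiv x s
  have hL2 : pdtx f x t
      = fderiv ℝ (fun p : ℝ × ℝ => fderiv ℝ F p ((1:ℝ),(0:ℝ))) (x,t) ((0:ℝ),(1:ℝ)) := by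
    simp only [pdtx, hfun]; exact hL.deriv
  have h1' : HasDerivAt (fun y : ℝ => ((y, t) : ℝ × ℝ)) ((1:ℝ), (0:ℝ)) x :=
    (hasDerivAt_id x).prodMk (hasDerivAt_const x t)
  have hR : HasDerivAt (fun y => fderiv ℝ F (y, t) ((0:ℝ),(1:ℝ)))
      (fderiv ℝ (fun p : ℝ × ℝ => fderiv ℝ F p ((0:ℝ),(1:ℝ))) (x,t) ((1:ℝ),(0:ℝ))) x :=
    by have := ((hg ((0:ℝ),(1:ℝ)) (x,t)).hasFDerivAt).comp_hasDerivAt x h1'; exact this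
  have hfun' : (fun y => _root_.pdt f y t) = fun y => fderiv ℝ F (y, t) ((0:ℝ),(1:ℝ)) := by
    funext y; exact hf.pdt_eq_fderiv y t
  have hR2 : _root_.pdx (_root_.pdt f) x t
      = fderiv ℝ (fun p : ℝ × ℝ => fderiv ℝ F p ((0:ℝ),(1:ℝ))) (x,t) ((1:ℝ),(0:ℝ)) := by
    simp only [_root_.pdx, hfun']; exact hR.deriv
  rw [hL2, hR2, hf.fderiv_apply_comm, hf.fderiv_apply_comm]
  have hsym : IsSymmSndFDerivAt ℝ F (x,t) :=
    (hf.contDiffAt).isSymmSndFDerivAt (by rw [minSmoothness_of_isRCLikeNormedField]; norm_cast)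
  exact hsym _ _

lemma hasDerivAt_integral (hf : Sm f) (t₀ : ℝ) :
    HasDerivAt (fun s => ∫ x in (0:ℝ)..1, f x s)
      (∫ x in (0:ℝ)..1, _root_.pdt f x t₀) t₀ := by
  obtain ⟨C, hC⟩ := (isCompact_Icc.prod isCompact_Icc :
      IsCompact (Icc (0:ℝ) 1 ×ˢ Icc (t₀-1) (t₀+1))).exists_bound_of_continuousOn
    ((hf.pdt).cont.continuousOn)
  have key := intervalIntegral.hasDerivAt_integral_of_dominated_loc_of_deriv_le
    (F := fun s x => f x s) (F' := fun s x => _root_.pdt f x s) (x₀ := t₀)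
    (bound := fun _ => C) (a := 0) (b := 1) (μ := volume) (s := Metric.ball t₀ 1) (Metric.ball_mem_nhds t₀ one_pos)
    (Eventually.of_forall fun s => ((hf.slice_x s).continuous).aestronglyMeasurable)
    (((hf.slice_x t₀).continuous).intervalIntegrable _ _)
    (((hf.pdt.slice_x t₀).continuous).aestronglyMeasurable)
    (Eventually.of_forall (fun x hx s hs => by
      have hx' : x ∈ Icc (0:ℝ) 1 := by
        rw [Set.uIoc_of_le (by norm_num : (0:ℝ) ≤ 1)] at hx
        exact ⟨le_of_lt hx.1, hx.2⟩
      have hs' : s ∈ Icc (t₀-1) (t₀+1) := by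
        rw [Metric.mem_ball, Real.dist_eq, abs_lt] at hs
        constructor <;> linarith [hs.1, hs.2]
      exact hC (x, s) ⟨hx', hs'⟩))
    (intervalIntegrable_const)
    (Eventually.of_forall (fun x _ s _ => hf.hasDerivAt_t x s))
  exact key.2

end Sm

lemma integral_deriv_of_contDiff {g : ℝ → ℝ} (hg : ContDiff ℝ (⊤ : ℕ∞) g) :
    ∫ x in (0:ℝ)..1, deriv g x = g 1 - g 0 :=
  intervalIntegral.integral_deriv_eq_sub (fun x _ => (hg.differentiable (by simp)) x)
    ((hg.continuous_deriv (by simp)).intervalIntegrable _ _)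

lemma const_of_deriv_zero {g : ℝ → ℝ} (hg : Continuous g) (t : ℝ) (ht : 0 ≤ t)
    (hd : ∀ s ∈ Ico (0:ℝ) t, HasDerivAt g 0 s) : g t = g 0 :=
  constant_of_has_deriv_right_zero (hg.continuousOn)
    (fun s hs => (hd s hs).hasDerivWithinAt) t (by constructor <;> [exact ht; rfl])

lemma cs_interval {g : ℝ → ℝ} (hg : Continuous g) {a b : ℝ} (hab : a ≤ b) :
    (∫ x in a..b, |g x|) ^ 2 ≤ (b - a) * ∫ x in a..b, (g x) ^ 2 := by
  rcases eq_or_lt_of_le hab with rfl | hlt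
  · simp
  · set m := b - a with hm
    have hm0 : 0 < m := by simp only [hm]; linarith
    set A := ∫ x in a..b, |g x| with hA
    set S := ∫ x in a..b, (g x) ^ 2 with hS
    set c := A / m with hc
    have h1 : (0:ℝ) ≤ ∫ x in a..b, (|g x| - c)^2 :=
      intervalIntegral.integral_nonneg hab (fun x _ => sq_nonneg _)
    have hi1 : IntervalIntegrable (fun x => (g x)^2) volume a b :=
      (hg.pow 2).intervalIntegrable _ _
    have hi2 : IntervalIntegrable (fun x => (2*c) * |g x|) volume a b :=
      (continuous_const.mul hg.abs).intervalIntegrable _ _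
    have h2 : ∫ x in a..b, (|g x| - c)^2 = S - 2*c*A + c^2 * m := by
      have e : (fun x => (|g x| - c)^2)
          = fun x => ((g x)^2 - (2*c) * |g x|) + c^2 := by
        funext x; rw [sub_sq, sq_abs]; ring
      rw [e, intervalIntegral.integral_add (hi1.sub hi2) intervalIntegrable_const,
        intervalIntegral.integral_sub hi1 hi2, intervalIntegral.integral_const_mul,
        intervalIntegral.integral_const]
      simp only [smul_eq_mul, ← hA, ← hS, ← hm]
      ring
    rw [h2, hc] at h1
    have hS0 : 0 ≤ S := intervalIntegral.integral_nonneg hab (fun x _ => sq_nonneg _)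
    have hmne : m ≠ 0 := ne_of_gt hm0
    have key : A^2 ≤ m * S := by
      have h3 : 0 ≤ S - A^2/m := by
        have e1 : 2*(A/m)*A = 2*A^2/m := by field_simp
        have e2 : (A/m)^2*m = A^2/m := by field_simp
        rw [e1, e2] at h1; ring_nf at h1 ⊢; linarith
      have := mul_le_mul_of_nonneg_left (le_of_sub_nonneg h3) (le_of_lt hm0)
      calc A^2 = m * (A^2/m) := by field_simp
        _ ≤ m * S := this
    exact key

lemma exists_zero_of_integral_zero {g : ℝ → ℝ} (hg : Continuous g)
    (h0 : ∫ x in (0:ℝ)..1, g x = 0) : ∃ x₀ ∈ Icc (0:ℝ) 1, g x₀ = 0 := by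
  obtain ⟨xm, hxm, hmin⟩ := isCompact_Icc.exists_isMinOn
    (Set.nonempty_Icc.2 (by norm_num : (0:ℝ) ≤ 1)) hg.continuousOn
  obtain ⟨xM, hxM, hmax⟩ := isCompact_Icc.exists_isMaxOn
    (Set.nonempty_Icc.2 (by norm_num : (0:ℝ) ≤ 1)) hg.continuousOn
  have h1 : g xm ≤ 0 := by
    by_contra h
    push_neg at h
    have hpos : 0 < ∫ x in (0:ℝ)..1, g x :=
      intervalIntegral.intervalIntegral_pos_of_pos_on (hg.intervalIntegrable _ _)
        (fun x hx => lt_of_lt_of_le h (hmin (Ioo_subset_Icc_self hx))) one_pos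
    rw [h0] at hpos; exact lt_irrefl _ hpos
  have h2 : 0 ≤ g xM := by
    by_contra h
    push_neg at h
    have hpos : 0 < ∫ x in (0:ℝ)..1, -g x :=
      intervalIntegral.intervalIntegral_pos_of_pos_on
        ((hg.neg).intervalIntegrable _ _)
        (fun x hx => by
          have := hmax (Ioo_subset_Icc_self hx); simp only [neg_pos]
          exact lt_of_le_of_lt this h) one_pos
    rw [intervalIntegral.integral_neg, h0, neg_zero] at hpos
    exact lt_irrefl _ hpos
  have hsub : Set.uIcc xm xM ⊆ Icc (0:ℝ) 1 := Set.uIcc_subset_Icc hxm hxM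
  have := intermediate_value_uIcc (hg.continuousOn.mono hsub)
  have h0mem : (0:ℝ) ∈ Set.uIcc (g xm) (g xM) := Set.mem_uIcc.2 (Or.inl ⟨h1, h2⟩)
  obtain ⟨x₀, hx₀, hgx₀⟩ := this h0mem
  exact ⟨x₀, hsub hx₀, hgx₀⟩


/-- for `λ = −1/2`, `κ ≤ 1/2` with periodic boundary conditions, a periodic
pressure and mean-zero initial velocity, the mean of `u` stays zero and
`|u| ≤ ‖uₓ‖₂ ≤ √E₀`. -/
theorem statement9 (kappa : ℝ) (hk : kappa ≤ 1/2)
    (T : EReal) (hT : 0 < T)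
    (u b p : ℝ → ℝ → ℝ)
    (hsys : GSys (-(1/2)) kappa T u b)
    (hbc : PeriodicBC T u b)
    (hp : ContDiff ℝ (⊤ : ℕ∞) (fun q : ℝ × ℝ => p q.1 q.2))
    (hppde : ∀ x ∈ Icc (0:ℝ) 1, ∀ t : ℝ, 0 ≤ t → (t : EReal) < T →
      pdt u x t + u x t * pdx u x t = -(pdx p x t) + b x t * pdx b x t)
    (hpbc : ∀ t : ℝ, 0 ≤ t → (t : EReal) < T → p 0 t = p 1 t)
    (hmean0 : ∫ x in (0:ℝ)..1, u x 0 = 0) :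
    ∀ t : ℝ, 0 ≤ t → (t : EReal) < T →
      (∫ x in (0:ℝ)..1, u x t) = 0 ∧
      ∀ x ∈ Icc (0:ℝ) 1,
        |u x t| ≤ Real.sqrt (∫ y in (0:ℝ)..1, (pdx u y t) ^ 2) ∧
        Real.sqrt (∫ y in (0:ℝ)..1, (pdx u y t) ^ 2)
          ≤ Real.sqrt ((∫ y in (0:ℝ)..1, (pdx u y 0) ^ 2)
              + (∫ y in (0:ℝ)..1, (pdx b y 0) ^ 2)) := by
  obtain ⟨hu, hb, hpde⟩ := hsys
  have hu : Sm u := hu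
  have hb : Sm b := hb
  have hpsm : Sm p := hp
  have hlt : ∀ {s t' : ℝ}, s ≤ t' → (t' : EReal) < T → (s : EReal) < T := by
    intro s t' h1 h2
    exact lt_of_le_of_lt (EReal.coe_le_coe_iff.2 h1) h2
  -- Part 1: mean of u stays zero
  have hmean : ∀ t : ℝ, 0 ≤ t → (t : EReal) < T → (∫ x in (0:ℝ)..1, u x t) = 0 := by
    intro t ht0 htT
    have hMd : ∀ s : ℝ, HasDerivAt (fun σ => ∫ x in (0:ℝ)..1, u x σ)
        (∫ x in (0:ℝ)..1, pdt u x s) s := fun s => hu.hasDerivAt_integral s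
    have hzero : ∀ s : ℝ, 0 ≤ s → (s : EReal) < T →
        (∫ x in (0:ℝ)..1, pdt u x s) = 0 := by
      intro s hs0 hsT
      set V : ℝ → ℝ := fun y => -((u y s)^2/2) - p y s + (b y s)^2/2 with hV
      have hVc : ContDiff ℝ (⊤ : ℕ∞) V :=
        (((((hu.slice_x s).pow 2).div_const 2).neg).sub (hpsm.slice_x s)).add
          (((hb.slice_x s).pow 2).div_const 2)
      have hderivV : Set.EqOn (fun x => pdt u x s) (deriv V) (Icc (0:ℝ) 1) := by
        intro x hx
        have hd : HasDerivAt V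
            (-((2 * u x s ^ 1 * pdx u x s)/2) - pdx p x s
              + (2 * b x s ^ 1 * pdx b x s)/2) x :=
          ((((((hu.hasDerivAt_x x s).pow 2).div_const 2).neg).sub
            (hpsm.hasDerivAt_x x s))).add (((hb.hasDerivAt_x x s).pow 2).div_const 2)
        have he := hppde x hx s hs0 hsT
        simp only
        rw [hd.deriv]
        linear_combination he
      have hcongr : (∫ x in (0:ℝ)..1, pdt u x s) = ∫ x in (0:ℝ)..1, deriv V x :=
        intervalIntegral.integral_congr
          (by rw [Set.uIcc_of_le (by norm_num : (0:ℝ) ≤ 1)]; exact hderivV)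
      rw [hcongr, integral_deriv_of_contDiff hVc]
      obtain ⟨h1, h2, h3, h4⟩ := hbc s hs0 hsT
      have h5 := hpbc s hs0 hsT
      simp only [hV]
      rw [h1, h3, h5]
      ring
    have hdiffM : Differentiable ℝ (fun σ => ∫ x in (0:ℝ)..1, u x σ) :=
      fun s => (hMd s).differentiableAt
    have hcont : Continuous (fun σ => ∫ x in (0:ℝ)..1, u x σ) := hdiffM.continuous
    have := const_of_deriv_zero hcont t ht0 (fun s hs => by
      have h0 : (∫ x in (0:ℝ)..1, pdt u x s) = 0 :=
        hzero s hs.1 (hlt (le_of_lt hs.2) htT)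
      simpa [h0] using hMd s)
    rw [this, hmean0]
  -- Part 2: energy conservation
  have hPsm : Sm (fun x s => (pdx u x s)^2) := (hu.pdx).pow 2
  have hQsm : Sm (fun x s => (pdx b x s)^2) := (hb.pdx).pow 2
  have hEd : ∀ s : ℝ, HasDerivAt
      (fun σ => (∫ x in (0:ℝ)..1, (pdx u x σ)^2) + (∫ x in (0:ℝ)..1, (pdx b x σ)^2))
      ((∫ x in (0:ℝ)..1, pdt (fun x s => (pdx u x s)^2) x s)
        + (∫ x in (0:ℝ)..1, pdt (fun x s => (pdx b x s)^2) x s)) s :=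
    fun s => (hPsm.hasDerivAt_integral s).add (hQsm.hasDerivAt_integral s)
  have henergy : ∀ t : ℝ, 0 ≤ t → (t : EReal) < T →
      ((∫ x in (0:ℝ)..1, (pdx u x t)^2) + (∫ x in (0:ℝ)..1, (pdx b x t)^2))
        = ((∫ x in (0:ℝ)..1, (pdx u x 0)^2) + (∫ x in (0:ℝ)..1, (pdx b x 0)^2)) := by
    intro t ht0 htT
    have hzero : ∀ s : ℝ, 0 ≤ s → (s : EReal) < T →
        ((∫ x in (0:ℝ)..1, pdt (fun x s => (pdx u x s)^2) x s)
          + (∫ x in (0:ℝ)..1, pdt (fun x s => (pdx b x s)^2) x s)) = 0 := by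
      intro s hs0 hsT
      set W : ℝ → ℝ := fun y =>
        (-(u y s * (pdx u y s)^2) - u y s * (pdx b y s)^2)
          + 2*kappa * (b y s * (pdx b y s * pdx u y s))
          + 2*Iterm (-(1/2)) kappa u b s * u y s with hWdef
      have hWc : ContDiff ℝ (⊤ : ℕ∞) W :=
        ((((hu.slice_x s).mul ((hu.pdx.slice_x s).pow 2)).neg.sub
            ((hu.slice_x s).mul ((hb.pdx.slice_x s).pow 2))).add
          (contDiff_const.mul ((hb.slice_x s).mul
            ((hb.pdx.slice_x s).mul (hu.pdx.slice_x s))))).add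
          (contDiff_const.mul (hu.slice_x s))
      -- the integrands agree with deriv W on (0,1)
      have hIoo : Set.EqOn
          (fun x => pdt (fun x s => (pdx u x s)^2) x s
            + pdt (fun x s => (pdx b x s)^2) x s) (deriv W) (Ioo (0:ℝ) 1) := by
        intro x hx
        have hxI : x ∈ Icc (0:ℝ) 1 := Ioo_subset_Icc_self hx
        have e1 := (hpde x hxI s hs0 hsT).1
        -- pdt of the squares
        have hP : pdt (fun x s => (pdx u x s)^2) x s
            = 2 * pdx u x s ^ 1 * pdtx u x s :=
          HasDerivAt.deriv (((hu.pdx).hasDerivAt_t x s).pow 2)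
        have hQ : pdt (fun x s => (pdx b x s)^2) x s
            = 2 * pdx b x s ^ 1 * pdtx b x s :=
          HasDerivAt.deriv (((hb.pdx).hasDerivAt_t x s).pow 2)
        -- pdtx b via Clairaut and equation (ii)
        have hbtx : pdtx b x s
            = (kappa * pdx b x s) * pdx u x s + (kappa * b x s) * pdxx u x s
              - (pdx u x s * pdx b x s + u x s * pdxx b x s) := by
          rw [hb.clairaut x s]
          have hev : (fun y => pdt b y s)
              =ᶠ[nhds x] (fun y => kappa * b y s * pdx u y s - u y s * pdx b y s) := by
            filter_upwards [Ioo_mem_nhds hx.1 hx.2] with y hy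
            have := (hpde y (Ioo_subset_Icc_self hy) s hs0 hsT).2
            linarith
          have hR : HasDerivAt (fun y => kappa * b y s * pdx u y s - u y s * pdx b y s)
              ((kappa * pdx b x s) * pdx u x s + (kappa * b x s) * pdxx u x s
                - (pdx u x s * pdx b x s + u x s * pdxx b x s)) x :=
            (((hb.hasDerivAt_x x s).const_mul kappa).mul (hu.hasDerivAt_pdx_x x s)).sub
              ((hu.hasDerivAt_x x s).mul (hb.hasDerivAt_pdx_x x s))
          rw [show _root_.pdx (pdt b) x s = deriv (fun y => pdt b y s) x from rfl,
            hev.deriv_eq, hR.deriv]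
        -- derivative of W
        have hWd : HasDerivAt W
            ((-(pdx u x s * (pdx u x s)^2 + u x s * (2 * pdx u x s ^ 1 * pdxx u x s))
              - (pdx u x s * (pdx b x s)^2 + u x s * (2 * pdx b x s ^ 1 * pdxx b x s)))
              + 2*kappa * (pdx b x s * (pdx b x s * pdx u x s)
                + b x s * (pdxx b x s * pdx u x s + pdx b x s * pdxx u x s))
              + 2*Iterm (-(1/2)) kappa u b s * pdx u x s) x :=
          ((((hu.hasDerivAt_x x s).mul ((hu.hasDerivAt_pdx_x x s).pow 2)).neg.sub
              ((hu.hasDerivAt_x x s).mul ((hb.hasDerivAt_pdx_x x s).pow 2))).add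
            (((hb.hasDerivAt_x x s).mul
              ((hb.hasDerivAt_pdx_x x s).mul (hu.hasDerivAt_pdx_x x s))).const_mul
                (2*kappa))).add
            ((hu.hasDerivAt_x x s).const_mul (2*Iterm (-(1/2)) kappa u b s))
        simp only
        rw [hP, hQ, hbtx, hWd.deriv]
        linear_combination (2 * pdx u x s) * e1
      -- extend to the closed interval by continuity
      have hIcc : Set.EqOn
          (fun x => pdt (fun x s => (pdx u x s)^2) x s
            + pdt (fun x s => (pdx b x s)^2) x s) (deriv W) (Icc (0:ℝ) 1) := by
        have hcl := hIoo.closure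
          (((hPsm.pdt.slice_x s).continuous).add ((hQsm.pdt.slice_x s).continuous))
          (hWc.continuous_deriv (by simp))
        rwa [closure_Ioo (by norm_num : (0:ℝ) ≠ 1)] at hcl
      have hintP : IntervalIntegrable (fun x => pdt (fun x s => (pdx u x s)^2) x s)
          volume 0 1 := ((hPsm.pdt.slice_x s).continuous).intervalIntegrable _ _
      have hintQ : IntervalIntegrable (fun x => pdt (fun x s => (pdx b x s)^2) x s)
          volume 0 1 := ((hQsm.pdt.slice_x s).continuous).intervalIntegrable _ _
      rw [← intervalIntegral.integral_add hintP hintQ]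
      have hcongr : (∫ x in (0:ℝ)..1, (pdt (fun x s => (pdx u x s)^2) x s
          + pdt (fun x s => (pdx b x s)^2) x s)) = ∫ x in (0:ℝ)..1, deriv W x :=
        intervalIntegral.integral_congr
          (by rw [Set.uIcc_of_le (by norm_num : (0:ℝ) ≤ 1)]; exact hIcc)
      rw [hcongr, integral_deriv_of_contDiff hWc]
      obtain ⟨h1, h2, h3, h4⟩ := hbc s hs0 hsT
      simp only [hWdef]
      rw [h1, h2, h3, h4]
      ring
    have hdiffE : Differentiable ℝ
        (fun σ => (∫ x in (0:ℝ)..1, (pdx u x σ)^2) + (∫ x in (0:ℝ)..1, (pdx b x σ)^2)) :=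
      fun s => (hEd s).differentiableAt
    exact const_of_deriv_zero hdiffE.continuous t ht0 (fun s hs => by
      have h0 := hzero s hs.1 (hlt (le_of_lt hs.2) htT)
      simpa [h0] using hEd s)
  refine fun t ht0 htT => ⟨hmean t ht0 htT, ?_⟩
  intro x hx
  have hcontu : Continuous (fun y => u y t) := (hu.slice_x t).continuous
  have hcontg : Continuous (fun y => pdx u y t) := (hu.pdx.slice_x t).continuous
  obtain ⟨x₀, hx₀, hux₀⟩ := exists_zero_of_integral_zero hcontu (hmean t ht0 htT)
  have hderivEq : (deriv fun y => u y t) = fun y => pdx u y t := funext fun _ => rfl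
  have hftc : (∫ y in x₀..x, pdx u y t) = u x t := by
    have h := intervalIntegral.integral_deriv_eq_sub
      (f := fun y => u y t) (a := x₀) (b := x)
      (fun y _ => ((hu.slice_x t).differentiable (by simp)) y)
      (by rw [hderivEq]; exact hcontg.intervalIntegrable _ _)
    rw [hderivEq] at h
    simp only at h
    rw [h, hux₀, sub_zero]
  have hS0 : (0:ℝ) ≤ ∫ y in (0:ℝ)..1, (pdx u y t)^2 :=
    intervalIntegral.integral_nonneg (by norm_num) (fun y _ => sq_nonneg _)
  have hintsq : IntervalIntegrable (fun y => (pdx u y t)^2) volume 0 1 :=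
    (hcontg.pow 2).intervalIntegrable _ _
  have key : (u x t)^2 ≤ ∫ y in (0:ℝ)..1, (pdx u y t)^2 := by
    rcases le_total x₀ x with hord | hord
    · have habs : |∫ y in x₀..x, pdx u y t| ≤ ∫ y in x₀..x, |pdx u y t| :=
        intervalIntegral.abs_integral_le_integral_abs hord
      have hcs : (∫ y in x₀..x, |pdx u y t|)^2 ≤ (x - x₀) * ∫ y in x₀..x, (pdx u y t)^2 :=
        cs_interval hcontg hord
      have hmono : (∫ y in x₀..x, (pdx u y t)^2) ≤ ∫ y in (0:ℝ)..1, (pdx u y t)^2 :=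
        intervalIntegral.integral_mono_interval hx₀.1 hord hx.2
          (Filter.Eventually.of_forall (fun y => sq_nonneg _)) hintsq
      have hlen : x - x₀ ≤ 1 := by linarith [hx₀.1, hx.2]
      have hinn : (0:ℝ) ≤ ∫ y in x₀..x, (pdx u y t)^2 :=
        intervalIntegral.integral_nonneg hord (fun y _ => sq_nonneg _)
      have h1 : (u x t)^2 = |∫ y in x₀..x, pdx u y t|^2 := by rw [hftc, sq_abs]
      have h2 : |∫ y in x₀..x, pdx u y t|^2 ≤ (∫ y in x₀..x, |pdx u y t|)^2 :=
        pow_le_pow_left₀ (abs_nonneg _) habs 2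
      nlinarith [h2, hcs, hmono, hinn]
    · have hsymm : (∫ y in x₀..x, pdx u y t) = -∫ y in x..x₀, pdx u y t :=
        intervalIntegral.integral_symm x x₀
      have habs : |∫ y in x..x₀, pdx u y t| ≤ ∫ y in x..x₀, |pdx u y t| :=
        intervalIntegral.abs_integral_le_integral_abs hord
      have hcs : (∫ y in x..x₀, |pdx u y t|)^2 ≤ (x₀ - x) * ∫ y in x..x₀, (pdx u y t)^2 :=
        cs_interval hcontg hord
      have hmono : (∫ y in x..x₀, (pdx u y t)^2) ≤ ∫ y in (0:ℝ)..1, (pdx u y t)^2 :=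
        intervalIntegral.integral_mono_interval hx.1 hord hx₀.2
          (Filter.Eventually.of_forall (fun y => sq_nonneg _)) hintsq
      have hlen : x₀ - x ≤ 1 := by linarith [hx.1, hx₀.2]
      have hinn : (0:ℝ) ≤ ∫ y in x..x₀, (pdx u y t)^2 :=
        intervalIntegral.integral_nonneg hord (fun y _ => sq_nonneg _)
      have h1 : (u x t)^2 = |∫ y in x..x₀, pdx u y t|^2 := by
        rw [← hftc, hsymm, ← sq_abs, abs_neg]
      have h2 : |∫ y in x..x₀, pdx u y t|^2 ≤ (∫ y in x..x₀, |pdx u y t|)^2 :=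
        pow_le_pow_left₀ (abs_nonneg _) habs 2
      nlinarith [h2, hcs, hmono, hinn]
  refine ⟨Real.abs_le_sqrt key, ?_⟩
  apply Real.sqrt_le_sqrt
  have hEt := henergy t ht0 htT
  have hbnn : (0:ℝ) ≤ ∫ y in (0:ℝ)..1, (pdx b y t)^2 :=
    intervalIntegral.integral_nonneg (by norm_num) (fun y _ => sq_nonneg _)
  linarith
end
end
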